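/- The two-bishop game graph on the 3×4 board satisfies β(B_L(3,4) □ B_D(3,4)) = 3. -/

import Mathlib

/-- The bishop graph on an `a × b` board: squares `(r,c)` and `(r',c')` are adjacent iff
they are distinct and `|r - r'| = |c - c'|`, i.e. they lie on a common diagonal. -/
def bishopGraph (a b : ℕ) : SimpleGraph (Fin a × Fin b) where
  Adj p q := p ≠ q ∧
    (p.1.val + q.2.val = q.1.val + p.2.val ∨ p.1.val + p.2.val = q.1.val + q.2.val)
  symm := by
    constructor
    rintro p q ⟨h1, h2⟩
    exact ⟨h1.symm, by omega⟩
  loopless := by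
    constructor
    rintro p ⟨h1, -⟩
    exact h1 rfl

/-- The light squares: `r + c` even. -/
def lightSquares (a b : ℕ) : Set (Fin a × Fin b) := {p | (p.1.val + p.2.val) % 2 = 0}

/-- The dark squares: `r + c` odd. -/
def darkSquares (a b : ℕ) : Set (Fin a × Fin b) := {p | (p.1.val + p.2.val) % 2 = 1}

/-- `B_L(a,b)`: the component of the bishop graph induced on the light squares. -/
def BL (a b : ℕ) : SimpleGraph (lightSquares a b) :=
  (bishopGraph a b).induce (lightSquares a b)

/-- `B_D(a,b)`: the component of the bishop graph induced on the dark squares. -/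
def BD (a b : ℕ) : SimpleGraph (darkSquares a b) :=
  (bishopGraph a b).induce (darkSquares a b)

/-- `S` resolves the (connected) simple graph `G`: distinct vertices have distinct
vectors of distances to the vertices of `S`. -/
def GResolves {V : Type*} (G : SimpleGraph V) (S : Set V) : Prop :=
  ∀ u v : V, (∀ s ∈ S, G.dist s u = G.dist s v) → u = v

/-- Metric dimension of a simple graph. -/
noncomputable def gMetricDim {V : Type*} (G : SimpleGraph V) : ℕ :=
  sInf {k : ℕ | ∃ S : Finset V, S.card = k ∧ GResolves G ↑S}

/-- `S` doubly resolves `G`: for distinct `u, v` there are `s₁, s₂ ∈ S` with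
`d(s₁,u) − d(s₂,u) ≠ d(s₁,v) − d(s₂,v)`. -/
def DoublyResolves {V : Type*} (G : SimpleGraph V) (S : Set V) : Prop :=
  ∀ u v : V, u ≠ v → ∃ s₁ ∈ S, ∃ s₂ ∈ S,
    (G.dist s₁ u : ℤ) - (G.dist s₂ u : ℤ) ≠ (G.dist s₁ v : ℤ) - (G.dist s₂ v : ℤ)

/- ### Auxiliary material -/

instance lightDec : DecidablePred (· ∈ lightSquares 3 4) :=
  fun p => inferInstanceAs (Decidable (_ = 0))

instance darkDec : DecidablePred (· ∈ darkSquares 3 4) :=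
  fun p => inferInstanceAs (Decidable (_ = 1))

instance bishopAdjDec (a b : ℕ) : DecidableRel (bishopGraph a b).Adj :=
  fun p q => inferInstanceAs (Decidable (p ≠ q ∧ _))

instance BLAdjDec : DecidableRel (BL 3 4).Adj :=
  fun u v => inferInstanceAs (Decidable ((bishopGraph 3 4).Adj u v))

instance BDAdjDec : DecidableRel (BD 3 4).Adj :=
  fun u v => inferInstanceAs (Decidable ((bishopGraph 3 4).Adj u v))

/-- Candidate distance function for graphs of diameter ≤ 2. -/
def dd {V : Type*} [DecidableEq V] (G : SimpleGraph V) [DecidableRel G.Adj] (u v : V) : ℕ :=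
  if u = v then 0 else if G.Adj u v then 1 else 2

lemma dist_eq_dd {V : Type*} [DecidableEq V] (G : SimpleGraph V) [DecidableRel G.Adj]
    (h2 : ∀ u v : V, u = v ∨ G.Adj u v ∨ ∃ w, G.Adj u w ∧ G.Adj w v) (u v : V) :
    G.dist u v = dd G u v := by
  unfold dd
  by_cases he : u = v
  · simp [he, SimpleGraph.dist_self]
  · simp only [he, if_false]
    by_cases ha : G.Adj u v
    · simp [ha, SimpleGraph.dist_eq_one_iff_adj]
    · simp only [ha, if_false]
      rcases h2 u v with h | h | ⟨w, hw1, hw2⟩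
      · exact absurd h he
      · exact absurd h ha
      · have hle : G.dist u v ≤ 2 :=
          SimpleGraph.dist_le (SimpleGraph.Walk.cons hw1 (SimpleGraph.Walk.cons hw2 SimpleGraph.Walk.nil))
        have hre : G.Reachable u v :=
          ⟨SimpleGraph.Walk.cons hw1 (SimpleGraph.Walk.cons hw2 SimpleGraph.Walk.nil)⟩
        have h0 : 0 < G.dist u v := hre.pos_dist_of_ne he
        have h1 : G.dist u v ≠ 1 := fun h => ha (SimpleGraph.dist_eq_one_iff_adj.mp h)
        omega

lemma preconn_of_h2 {V : Type*} (G : SimpleGraph V)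
    (h2 : ∀ u v : V, u = v ∨ G.Adj u v ∨ ∃ w, G.Adj u w ∧ G.Adj w v) :
    G.Preconnected := by
  intro u v
  rcases h2 u v with h | h | ⟨w, hw1, hw2⟩
  · exact h ▸ SimpleGraph.Reachable.refl u
  · exact ⟨h.toWalk⟩
  · exact ⟨SimpleGraph.Walk.cons hw1 (SimpleGraph.Walk.cons hw2 SimpleGraph.Walk.nil)⟩

lemma walk_boxProd_le {α β : Type*} {G : SimpleGraph α} {H : SimpleGraph β}
    (hG : G.Connected) (hH : H.Connected) :
    ∀ {x y : α × β} (w : (G.boxProd H).Walk x y),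
      G.dist x.1 y.1 + H.dist x.2 y.2 ≤ w.length := by
  intro x y w
  induction w with
  | nil => simp [SimpleGraph.dist_self]
  | @cons x z y h p ih =>
    rcases h with ⟨hadj, heq⟩ | ⟨hadj, heq⟩
    · have t1 : G.dist x.1 y.1 ≤ G.dist x.1 z.1 + G.dist z.1 y.1 := hG.dist_triangle
      have t2 : G.dist x.1 z.1 ≤ 1 := SimpleGraph.dist_le hadj.toWalk
      have t3 : H.dist x.2 y.2 = H.dist z.2 y.2 := by rw [heq]
      show G.dist x.1 y.1 + H.dist x.2 y.2 ≤ p.length + 1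
      omega
    · have t1 : H.dist x.2 y.2 ≤ H.dist x.2 z.2 + H.dist z.2 y.2 := hH.dist_triangle
      have t2 : H.dist x.2 z.2 ≤ 1 := SimpleGraph.dist_le hadj.toWalk
      have t3 : G.dist x.1 y.1 = G.dist z.1 y.1 := by rw [heq]
      show G.dist x.1 y.1 + H.dist x.2 y.2 ≤ p.length + 1
      omega

lemma boxProd_dist {α β : Type*} {G : SimpleGraph α} {H : SimpleGraph β}
    (hG : G.Connected) (hH : H.Connected) (x y : α × β) :
    (G.boxProd H).dist x y = G.dist x.1 y.1 + H.dist x.2 y.2 := by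
  refine le_antisymm ?_ ?_
  · obtain ⟨p, hp⟩ := hG.exists_walk_length_eq_dist x.1 y.1
    obtain ⟨q, hq⟩ := hH.exists_walk_length_eq_dist x.2 y.2
    obtain ⟨x1, x2⟩ := x
    obtain ⟨y1, y2⟩ := y
    calc (G.boxProd H).dist (x1, x2) (y1, y2)
        ≤ ((p.boxProdLeft H x2).append (q.boxProdRight G y1)).length :=
          SimpleGraph.dist_le _
      _ = p.length + q.length := by
          rw [SimpleGraph.Walk.length_append]
          exact congrArg₂ (· + ·) (SimpleGraph.Walk.length_map ..) (SimpleGraph.Walk.length_map ..)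
      _ = _ := by rw [hp, hq]
  · obtain ⟨w, hw⟩ := (hG.boxProd hH).exists_walk_length_eq_dist x y
    have := walk_boxProd_le hG hH w
    omega

/- Facts about the specific graphs, by `decide`. -/

lemma h2L : ∀ u v : (lightSquares 3 4 : Set _),
    u = v ∨ (BL 3 4).Adj u v ∨ ∃ w, (BL 3 4).Adj u w ∧ (BL 3 4).Adj w v := by decide

lemma h2D : ∀ u v : (darkSquares 3 4 : Set _),
    u = v ∨ (BD 3 4).Adj u v ∨ ∃ w, (BD 3 4).Adj u w ∧ (BD 3 4).Adj w v := by decide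

lemma connL : (BL 3 4).Connected := by
  haveI : Nonempty (lightSquares 3 4 : Set _) := ⟨⟨((0 : Fin 3), (0 : Fin 4)), by decide⟩⟩
  exact ⟨preconn_of_h2 _ h2L⟩

lemma connD : (BD 3 4).Connected := by
  haveI : Nonempty (darkSquares 3 4 : Set _) := ⟨⟨((0 : Fin 3), (1 : Fin 4)), by decide⟩⟩
  exact ⟨preconn_of_h2 _ h2D⟩

abbrev GameV := (lightSquares 3 4 : Set _) × (darkSquares 3 4 : Set _)

/-- Computable distance on the game graph. -/
def DDist (x y : GameV) : ℕ := dd (BL 3 4) x.1 y.1 + dd (BD 3 4) x.2 y.2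

lemma game_dist (x y : GameV) : ((BL 3 4).boxProd (BD 3 4)).dist x y = DDist x y := by
  rw [boxProd_dist connL connD, dist_eq_dd _ h2L, dist_eq_dd _ h2D]
  rfl

def gs1 : GameV := (⟨((0 : Fin 3), (0 : Fin 4)), by decide⟩, ⟨((0 : Fin 3), (1 : Fin 4)), by decide⟩)
def gs2 : GameV := (⟨((1 : Fin 3), (3 : Fin 4)), by decide⟩, ⟨((1 : Fin 3), (0 : Fin 4)), by decide⟩)
def gs3 : GameV := (⟨((1 : Fin 3), (3 : Fin 4)), by decide⟩, ⟨((2 : Fin 3), (3 : Fin 4)), by decide⟩)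

lemma key_up : ∀ u v : GameV, DDist gs1 u = DDist gs1 v → DDist gs2 u = DDist gs2 v →
    DDist gs3 u = DDist gs3 v → u = v := by decide

set_option synthInstance.maxHeartbeats 1000000 in
set_option synthInstance.maxSize 512 in
set_option maxHeartbeats 2000000 in
lemma key_low : ∀ s1 s2 : GameV, ∃ u v : GameV,
    u ≠ v ∧ DDist s1 u = DDist s1 v ∧ DDist s2 u = DDist s2 v := by decide

/-- the two-bishop game graph on the `3 × 4` board,
`B_L(3,4) □ B_D(3,4)`, has metric dimension 3. -/
theorem stmt13 : gMetricDim ((BL 3 4).boxProd (BD 3 4)) = 3 := by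
  have mem3 : 3 ∈ {k : ℕ | ∃ S : Finset GameV, S.card = k ∧
      GResolves ((BL 3 4).boxProd (BD 3 4)) ↑S} := by
    refine ⟨{gs1, gs2, gs3}, by decide, ?_⟩
    intro u v h
    have h1 := h gs1 (by simp)
    have h2 := h gs2 (by simp)
    have h3 := h gs3 (by simp)
    rw [game_dist, game_dist] at h1 h2 h3
    exact key_up u v h1 h2 h3
  refine le_antisymm (Nat.sInf_le mem3) (le_csInf ⟨3, mem3⟩ ?_)
  rintro k ⟨S, rfl, hres⟩
  by_contra hk
  push_neg at hk
  have hcard : S.card ≤ 2 := by omega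
  have hcover : ∃ a b : GameV, ∀ s ∈ S, s = a ∨ s = b := by
    interval_cases h : S.card
    · exact ⟨gs1, gs1, fun s hs => absurd hs (by simp [Finset.card_eq_zero.mp h])⟩
    · obtain ⟨a, ha⟩ := Finset.card_eq_one.mp h
      exact ⟨a, a, fun s hs => by simp [ha] at hs; tauto⟩
    · obtain ⟨a, b, -, hab⟩ := Finset.card_eq_two.mp h
      exact ⟨a, b, fun s hs => by simp [hab] at hs; tauto⟩
  obtain ⟨a, b, hab⟩ := hcover
  obtain ⟨u, v, huv, hu1, hu2⟩ := key_low a b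
  apply huv
  apply hres u v
  intro s hs
  rw [game_dist, game_dist]
  rcases hab s hs with rfl | rfl
  · exact hu1
  · exact hu2
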